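/- Fix x ∈ [1/2, M], let F be a continuous strictly increasing CDF on [1/2, M] with density f, and let β(x) = ∫_{1/2}^x f(t)(e^t − 1)/(F(t) + (1 − F(t))e^t) dt. Define g(y) = x·e^y·F(β^{−1}(y)) + x(1 − e^y)/(1 − e^{−x}) for y in the range of β. Then g'(y) = (x e^y / ((1 − e^{−x})(e^{β^{−1}(y)} − 1))) · (1 − e^{−x + β^{−1}(y)}); in particular g'(y) > 0 for y < β(x), g'(β(x)) = 0, and g'(y) < 0 for y > β(x), so g attains its unique global maximum at y = β(x). -/

import Mathlib

/-!
The density `f` need not be continuous, so `β' = f · w` on the interior, with `w` the continuous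
factor `(e^t - 1) / (F + (1 - F) e^t)`, is obtained by substituting `u = F t`: the bid is the
primitive of the continuous function `w ∘ F⁻¹`, composed with `F`. The inverse function theorem
gives `(β⁻¹)' = 1 / (f w)` at `β t`, and `f / β' = 1 / w = (1 - F) + 1 / (e^t - 1)` collapses `g'`
to the stated formula, whose sign is that of `x - β⁻¹ y`, i.e. of `β x - y`. So `g` increases
strictly up to `β x` and decreases strictly after it.
-/

open Set Function MeasureTheory Real Topology

theorem IsCompact.continuousOn_image_of_leftInvOn {α β : Type*} [TopologicalSpace α]
    [TopologicalSpace β] [T2Space β] {f : α → β} {s : Set α} (hs : IsCompact s)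
    (hf : ContinuousOn f s) {finv : β → α} (hleft : LeftInvOn finv f s) :
    ContinuousOn finv (f '' s) := by
  refine continuousOn_iff_isClosed.2 fun t ht => ⟨f '' (t ∩ s), ?_, ?_⟩
  · exact ((hs.inter_left ht).image_of_continuousOn (hf.mono inter_subset_right)).isClosed
  · rw [inter_eq_self_of_subset_left (image_mono inter_subset_right), hleft.image_inter']

theorem continuousOn_Icc_of_leftInvOn {θ ψ : ℝ → ℝ} {p q : ℝ} (hpq : p ≤ q)
    (hθc : ContinuousOn θ (Icc p q)) (hθ : MonotoneOn θ (Icc p q))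
    (hleft : LeftInvOn ψ θ (Icc p q)) : ContinuousOn ψ (Icc (θ p) (θ q)) := by
  rw [← hθc.image_Icc_of_monotoneOn hpq hθ]
  exact isCompact_Icc.continuousOn_image_of_leftInvOn hθc hleft

theorem hasDerivAt_of_leftInvOn_Icc {θ ψ : ℝ → ℝ} {p q t θ' : ℝ}
    (hθc : ContinuousOn θ (Icc p q)) (hθ : StrictMonoOn θ (Icc p q))
    (hleft : LeftInvOn ψ θ (Icc p q)) (ht : t ∈ Ioo p q) (hderiv : HasDerivAt θ θ' t)
    (hθ' : θ' ≠ 0) : HasDerivAt ψ θ'⁻¹ (θ t) := by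
  have hpq : p ≤ q := ht.1.le.trans ht.2.le
  have hp : p ∈ Icc p q := left_mem_Icc.2 hpq
  have hq : q ∈ Icc p q := right_mem_Icc.2 hpq
  have hnhds : Icc (θ p) (θ q) ∈ 𝓝 (θ t) :=
    Icc_mem_nhds (hθ hp (Ioo_subset_Icc_self ht) ht.1) (hθ (Ioo_subset_Icc_self ht) hq ht.2)
  have himage := hθc.image_Icc_of_monotoneOn hpq hθ.monotoneOn
  refine HasDerivAt.of_local_left_inverse
    ((continuousOn_Icc_of_leftInvOn hpq hθc hθ.monotoneOn hleft).continuousAt hnhds)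
    (by rwa [hleft (Ioo_subset_Icc_self ht)]) hθ' ?_
  filter_upwards [hnhds] with z hz
  obtain ⟨s, hs, rfl⟩ := himage.symm ▸ hz
  rw [hleft hs]

theorem continuousOn_integral_deriv_mul {F f w : ℝ → ℝ} {a b : ℝ}
    (hF : ∀ s ∈ Icc a b, HasDerivAt F (f s) s) (hf : ∀ s ∈ Ioo a b, 0 ≤ f s)
    (hw : ContinuousOn w (Icc a b)) (hab : a ≤ b) :
    ContinuousOn (fun y => ∫ s in a..y, f s * w s) (Icc a b) := by
  have hFc : ContinuousOn F (Icc a b) := fun s hs => (hF s hs).continuousAt.continuousWithinAt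
  have hfint : IntegrableOn f (Icc a b) := (integrableOn_Icc_iff_integrableOn_Ioc).2 <|
    intervalIntegral.integrableOn_deriv_of_nonneg hFc (fun s hs => hF s (Ioo_subset_Icc_self hs)) hf
  rw [← uIcc_of_le hab] at hw hfint ⊢
  exact intervalIntegral.continuousOn_primitive_interval (hfint.mul_continuousOn hw isCompact_uIcc)

theorem integral_deriv_mul_eq_integral_comp_of_leftInvOn {F f w G : ℝ → ℝ} {a b y : ℝ}
    (hF : ∀ s ∈ Icc a b, HasDerivAt F (f s) s) (hFmono : MonotoneOn F (Icc a b))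
    (hf : ∀ s ∈ Ioo a b, 0 ≤ f s) (hG : LeftInvOn G F (Icc a b)) (hy : y ∈ Icc a b) :
    ∫ s in a..y, f s * w s = ∫ u in F a..F y, w (G u) := by
  have hsub : Icc a y ⊆ Icc a b := Icc_subset_Icc_right hy.2
  rw [intervalIntegral.integral_of_le hy.1,
    intervalIntegral.integral_of_le (hFmono (left_mem_Icc.2 (hy.1.trans hy.2)) hy hy.1),
    ← integral_Icc_eq_integral_Ioc, ← integral_Icc_eq_integral_Ioc,
    ← integral_Icc_deriv_smul_of_deriv_nonneg
      (fun s hs => (hF s (hsub hs)).continuousAt.continuousWithinAt)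
      (fun s hs => hF s (hsub (Ioo_subset_Icc_self hs)))
      (fun s hs => hf s (Ioo_subset_Ioo_right hy.2 hs)) hy.1]
  exact setIntegral_congr_fun measurableSet_Icc fun s hs => by
    rw [smul_eq_mul, hG (hsub hs)]

theorem hasDerivAt_integral_deriv_mul {F f w : ℝ → ℝ} {a b t : ℝ}
    (hF : ∀ s ∈ Icc a b, HasDerivAt F (f s) s) (hFmono : StrictMonoOn F (Icc a b))
    (hf : ∀ s ∈ Ioo a b, 0 ≤ f s) (hw : ContinuousOn w (Icc a b)) (ht : t ∈ Ioo a b) :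
    HasDerivAt (fun y => ∫ s in a..y, f s * w s) (f t * w t) t := by
  have hab : a ≤ b := ht.1.le.trans ht.2.le
  have htI : t ∈ Icc a b := Ioo_subset_Icc_self ht
  have hFc : ContinuousOn F (Icc a b) := fun s hs => (hF s hs).continuousAt.continuousWithinAt
  have hleft : LeftInvOn (invFunOn F (Icc a b)) F (Icc a b) := hFmono.injOn.leftInvOn_invFunOn
  set W := w ∘ invFunOn F (Icc a b)
  have hWc : ContinuousOn W (Icc (F a) (F b)) := by
    refine hw.comp (continuousOn_Icc_of_leftInvOn hab hFc hFmono.monotoneOn hleft) ?_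
    rw [← hFc.image_Icc_of_monotoneOn hab hFmono.monotoneOn]
    rintro _ ⟨s, hs, rfl⟩
    rwa [hleft hs]
  have hFt : F t ∈ Ioo (F a) (F b) :=
    ⟨hFmono (left_mem_Icc.2 hab) htI ht.1, hFmono htI (right_mem_Icc.2 hab) ht.2⟩
  have hprim : HasDerivAt (fun u => ∫ v in F a..u, W v) (W (F t)) (F t) :=
    intervalIntegral.integral_hasDerivAt_right
      ((hWc.mono (Icc_subset_Icc_right hFt.2.le)).intervalIntegrable_of_Icc hFt.1.le)
      ((hWc.mono Ioo_subset_Icc_self).stronglyMeasurableAtFilter isOpen_Ioo _ hFt)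
      (hWc.continuousAt (Icc_mem_nhds hFt.1 hFt.2))
  have hcomp := hprim.comp t (hF t htI)
  rw [show W (F t) = w t from congrArg w (hleft htI), mul_comm] at hcomp
  refine hcomp.congr_of_eventuallyEq ?_
  filter_upwards [Ioo_mem_nhds ht.1 ht.2] with y hy
  exact integral_deriv_mul_eq_integral_comp_of_leftInvOn hF hFmono.monotoneOn hf hleft
    (Ioo_subset_Icc_self hy)

theorem StrictMonoOn.sign_apply_sub_apply {α β : Type*} [AddCommGroup α] [LinearOrder α]
    [IsOrderedAddMonoid α] [AddCommGroup β] [LinearOrder β] [IsOrderedAddMonoid β] {f : α → β}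
    {s : Set α} (hf : StrictMonoOn f s) {a b : α} (ha : a ∈ s) (hb : b ∈ s) :
    SignType.sign (f a - f b) = SignType.sign (a - b) := by
  rcases lt_trichotomy a b with h | rfl | h
  · rw [sign_neg (sub_neg.2 h), sign_neg (sub_neg.2 (hf ha hb h))]
  · simp
  · rw [sign_pos (sub_pos.2 h), sign_pos (sub_pos.2 (hf hb ha h))]

theorem apply_lt_apply_of_hasDerivAt_of_sign_eq {g g' : ℝ → ℝ} {a b c : ℝ}
    (hg : ContinuousOn g (Icc a b)) (hc : c ∈ Icc a b)
    (hderiv : ∀ y ∈ Ioo a b, HasDerivAt g (g' y) y)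
    (hsign : ∀ y ∈ Ioo a b, SignType.sign (g' y) = SignType.sign (c - y)) :
    ∀ y ∈ Icc a b, y ≠ c → g y < g c := by
  have hmono : StrictMonoOn g (Icc a c) := by
    refine strictMonoOn_of_deriv_pos (convex_Icc a c) (hg.mono (Icc_subset_Icc_right hc.2))
      fun y hy => ?_
    rw [interior_Icc] at hy
    have hy' : y ∈ Ioo a b := ⟨hy.1, hy.2.trans_le hc.2⟩
    rw [(hderiv y hy').deriv, ← sign_eq_one_iff, hsign y hy', sign_pos (sub_pos.2 hy.2)]
  have hanti : StrictAntiOn g (Icc c b) := by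
    refine strictAntiOn_of_deriv_neg (convex_Icc c b) (hg.mono (Icc_subset_Icc_left hc.1))
      fun y hy => ?_
    rw [interior_Icc] at hy
    have hy' : y ∈ Ioo a b := ⟨hc.1.trans_lt hy.1, hy.2⟩
    rw [(hderiv y hy').deriv, ← sign_eq_neg_one_iff, hsign y hy', sign_neg (sub_neg.2 hy.1)]
  intro y hy hne
  rcases hne.lt_or_gt with h | h
  · exact hmono ⟨hy.1, h.le⟩ (right_mem_Icc.2 hc.1) h
  · exact hanti (left_mem_Icc.2 hc.2) ⟨h.le, hy.2⟩ h

noncomputable def bidWeight (F : ℝ → ℝ) (t : ℝ) : ℝ := (exp t - 1) / (F t + (1 - F t) * exp t)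

noncomputable def equilibriumBid (F f : ℝ → ℝ) (a y : ℝ) : ℝ := ∫ t in a..y, f t * bidWeight F t

theorem one_le_add_one_sub_mul_exp {p t : ℝ} (hp : p ∈ Icc (0 : ℝ) 1) (ht : 0 ≤ t) :
    1 ≤ p + (1 - p) * exp t := by
  nlinarith [one_le_exp ht, hp.1, hp.2]

theorem bidWeight_pos {F : ℝ → ℝ} {t : ℝ} (hF : F t ∈ Icc (0 : ℝ) 1) (ht : 0 < t) :
    0 < bidWeight F t :=
  div_pos (sub_pos.2 (one_lt_exp_iff.2 ht)) (one_pos.trans_le (one_le_add_one_sub_mul_exp hF ht.le))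

theorem continuousOn_bidWeight {F : ℝ → ℝ} {s : Set ℝ} (hF : ContinuousOn F s)
    (hF01 : MapsTo F s (Icc 0 1)) (hs : s ⊆ Ici 0) : ContinuousOn (bidWeight F) s :=
  (continuousOn_exp.sub continuousOn_const).div
    (hF.add ((continuousOn_const.sub hF).mul continuousOn_exp)) fun _ ht =>
      (one_pos.trans_le (one_le_add_one_sub_mul_exp (hF01 ht) (hs ht))).ne'

theorem inv_bidWeight (F : ℝ → ℝ) {t : ℝ} (ht : t ≠ 0) :
    (bidWeight F t)⁻¹ = 1 - F t + (exp t - 1)⁻¹ := by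
  have : exp t - 1 ≠ 0 := sub_ne_zero.2 ((exp_eq_one_iff t).not.2 ht)
  rw [bidWeight, inv_div]
  field_simp
  ring

theorem continuousOn_equilibriumBid {F f : ℝ → ℝ} {a b : ℝ}
    (hF : ∀ t ∈ Icc a b, HasDerivAt F (f t) t) (hf : ∀ t ∈ Ioo a b, 0 ≤ f t)
    (hF01 : MapsTo F (Icc a b) (Icc 0 1)) (ha : 0 ≤ a) (hab : a ≤ b) :
    ContinuousOn (equilibriumBid F f a) (Icc a b) :=
  continuousOn_integral_deriv_mul hF hf (continuousOn_bidWeight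
    (fun t ht => (hF t ht).continuousAt.continuousWithinAt) hF01 fun _ ht => ha.trans ht.1) hab

theorem hasDerivAt_equilibriumBid {F f : ℝ → ℝ} {a b t : ℝ}
    (hF : ∀ t ∈ Icc a b, HasDerivAt F (f t) t) (hFmono : StrictMonoOn F (Icc a b))
    (hf : ∀ t ∈ Ioo a b, 0 ≤ f t) (hF01 : MapsTo F (Icc a b) (Icc 0 1)) (ha : 0 ≤ a)
    (ht : t ∈ Ioo a b) : HasDerivAt (equilibriumBid F f a) (f t * bidWeight F t) t :=
  hasDerivAt_integral_deriv_mul hF hFmono hf (continuousOn_bidWeight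
    (fun t ht => (hF t ht).continuousAt.continuousWithinAt) hF01 fun _ ht => ha.trans ht.1) ht

theorem strictMonoOn_equilibriumBid {F f : ℝ → ℝ} {a b : ℝ}
    (hF : ∀ t ∈ Icc a b, HasDerivAt F (f t) t) (hFmono : StrictMonoOn F (Icc a b))
    (hf : ∀ t ∈ Ioo a b, 0 < f t) (hF01 : MapsTo F (Icc a b) (Icc 0 1)) (ha : 0 ≤ a)
    (hab : a ≤ b) : StrictMonoOn (equilibriumBid F f a) (Icc a b) := by
  have hf' : ∀ t ∈ Ioo a b, 0 ≤ f t := fun t ht => (hf t ht).le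
  refine strictMonoOn_of_deriv_pos (convex_Icc a b)
    (continuousOn_equilibriumBid hF hf' hF01 ha hab) fun t ht => ?_
  rw [interior_Icc] at ht
  rw [(hasDerivAt_equilibriumBid hF hFmono hf' hF01 ha ht).deriv]
  exact mul_pos (hf t ht) (bidWeight_pos (hF01 (Ioo_subset_Icc_self ht)) (ha.trans_lt ht.1))

theorem hasDerivAt_bidUtility {G : ℝ → ℝ} {G' x y : ℝ} (hG : HasDerivAt G G' y) :
    HasDerivAt (fun z => x * exp z * G z + x * (1 - exp z) / (1 - exp (-x)))
      (x * exp y * G y + x * exp y * G' - x * exp y / (1 - exp (-x))) y := by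
  refine ((((hasDerivAt_exp y).const_mul x).mul hG).add
    ((((hasDerivAt_exp y).const_sub 1).const_mul x).div_const (1 - exp (-x)))).congr_deriv ?_
  ring

theorem bidUtility_deriv_eq (F : ℝ → ℝ) {x y t : ℝ} (hx : x ≠ 0) (ht : t ≠ 0) :
    x * exp y * F t + x * exp y * (bidWeight F t)⁻¹ - x * exp y / (1 - exp (-x)) =
      x * exp y / ((1 - exp (-x)) * (exp t - 1)) * (1 - exp (-x + t)) := by
  have h1 : exp t - 1 ≠ 0 := sub_ne_zero.2 ((exp_eq_one_iff t).not.2 ht)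
  have h2 : 1 - exp (-x) ≠ 0 := sub_ne_zero.2 (Ne.symm ((exp_eq_one_iff _).not.2 (neg_ne_zero.2 hx)))
  rw [inv_bidWeight F ht, exp_add]
  field_simp
  rw [exp_neg]
  field_simp
  ring

theorem sign_bidUtility_deriv {x y t : ℝ} (hx : 0 < x) (ht : 0 < t) :
    SignType.sign (x * exp y / ((1 - exp (-x)) * (exp t - 1)) * (1 - exp (-x + t))) =
      SignType.sign (x - t) := by
  have hc : 0 < x * exp y / ((1 - exp (-x)) * (exp t - 1)) :=
    div_pos (mul_pos hx (exp_pos y)) (mul_pos (sub_pos.2 (exp_lt_one_iff.2 (neg_neg_of_pos hx)))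
      (sub_pos.2 (one_lt_exp_iff.2 ht)))
  rw [sign_mul, sign_pos hc, one_mul, ← exp_zero,
    (exp_strictMono.strictMonoOn univ).sign_apply_sub_apply (mem_univ _) (mem_univ _)]
  ring_nf

theorem hasDerivAt_bidUtility_equilibriumBid {F f ψ : ℝ → ℝ} {a b t x : ℝ}
    (hF : ∀ t ∈ Icc a b, HasDerivAt F (f t) t) (hFmono : StrictMonoOn F (Icc a b))
    (hf : ∀ t ∈ Ioo a b, 0 < f t) (hF01 : MapsTo F (Icc a b) (Icc 0 1)) (ha : 0 ≤ a)
    (hψ : LeftInvOn ψ (equilibriumBid F f a) (Icc a b)) (hx : x ≠ 0) (ht : t ∈ Ioo a b) :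
    HasDerivAt (fun z => x * exp z * F (ψ z) + x * (1 - exp z) / (1 - exp (-x)))
      (x * exp (equilibriumBid F f a t) / ((1 - exp (-x)) * (exp t - 1)) * (1 - exp (-x + t)))
      (equilibriumBid F f a t) := by
  have htI := Ioo_subset_Icc_self ht
  have hab : a ≤ b := ht.1.le.trans ht.2.le
  have hf' : ∀ t ∈ Ioo a b, 0 ≤ f t := fun t ht => (hf t ht).le
  have hψ' := hasDerivAt_of_leftInvOn_Icc (continuousOn_equilibriumBid hF hf' hF01 ha hab)
    (strictMonoOn_equilibriumBid hF hFmono hf hF01 ha hab) hψ ht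
    (hasDerivAt_equilibriumBid hF hFmono hf' hF01 ha ht)
    (mul_pos (hf t ht) (bidWeight_pos (hF01 htI) (ha.trans_lt ht.1))).ne'
  have hFt : HasDerivAt F (f t) (ψ (equilibriumBid F f a t)) := by
    rw [hψ htI]
    exact hF t htI
  have hG : HasDerivAt (F ∘ ψ) (bidWeight F t)⁻¹ (equilibriumBid F f a t) :=
    (hFt.comp _ hψ').congr_deriv (by rw [mul_inv, mul_inv_cancel_left₀ (hf t ht).ne'])
  have := hasDerivAt_bidUtility (x := x) hG
  rwa [comp_apply, hψ htI, bidUtility_deriv_eq F hx (ha.trans_lt ht.1).ne'] at this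

theorem stmt10_general (M x : ℝ) (hx : x ∈ Set.Icc (1/2 : ℝ) M)
    (F f β βinv : ℝ → ℝ)
    (hFderiv : ∀ t ∈ Set.Icc (1/2 : ℝ) M, HasDerivAt F (f t) t)
    (hfpos : ∀ t ∈ Set.Icc (1/2 : ℝ) M, 0 < f t)
    (hFmono : StrictMonoOn F (Set.Icc (1/2 : ℝ) M))
    (hF0 : F (1/2) = 0) (hF1 : F M = 1)
    (hβ : ∀ y : ℝ, β y =
      ∫ t in (1/2 : ℝ)..y, f t * (Real.exp t - 1) / (F t + (1 - F t) * Real.exp t))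
    (hinv : ∀ t ∈ Set.Icc (1/2 : ℝ) M, βinv (β t) = t)
    (g D : ℝ → ℝ)
    (hg : ∀ y : ℝ, g y =
      x * Real.exp y * F (βinv y) + x * (1 - Real.exp y) / (1 - Real.exp (-x)))
    (hD : ∀ y : ℝ, D y =
      x * Real.exp y / ((1 - Real.exp (-x)) * (Real.exp (βinv y) - 1)) *
        (1 - Real.exp (-x + βinv y))) :
    (∀ y ∈ Set.Ioo (β (1/2)) (β M), HasDerivAt g (D y) y) ∧
    (∀ y ∈ Set.Ioo (β (1/2)) (β M), y < β x → 0 < D y) ∧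
    (∀ y ∈ Set.Ioo (β (1/2)) (β M), y = β x → D y = 0) ∧
    (∀ y ∈ Set.Ioo (β (1/2)) (β M), β x < y → D y < 0) ∧
    (∀ y ∈ Set.Icc (β (1/2)) (β M), y ≠ β x → g y < g (β x)) := by
  have hhalf : (1/2 : ℝ) ≤ M := hx.1.trans hx.2
  have hx0 : 0 < x := by linarith [hx.1]
  have hFc : ContinuousOn F (Icc (1/2) M) := fun t ht =>
    (hFderiv t ht).continuousAt.continuousWithinAt
  have hF01 : MapsTo F (Icc (1/2) M) (Icc 0 1) := hF0 ▸ hF1 ▸ hFmono.monotoneOn.mapsTo_Icc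
  have hf : ∀ t ∈ Ioo (1/2 : ℝ) M, 0 < f t := fun t ht => hfpos t (Ioo_subset_Icc_self ht)
  have hβeq : β = equilibriumBid F f (1/2) := funext fun y => by
    simp only [hβ, equilibriumBid, bidWeight, mul_div_assoc]
  have hβc : ContinuousOn β (Icc (1/2) M) := hβeq ▸
    continuousOn_equilibriumBid hFderiv (fun t ht => (hf t ht).le) hF01 (by norm_num) hhalf
  have hβmono : StrictMonoOn β (Icc (1/2) M) :=
    hβeq ▸ strictMonoOn_equilibriumBid hFderiv hFmono hf hF01 (by norm_num) hhalf
  have hderiv : ∀ y ∈ Ioo (β (1/2)) (β M),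
      HasDerivAt g (D y) y ∧ SignType.sign (D y) = SignType.sign (β x - y) := by
    intro y hy
    obtain ⟨t, ht, rfl⟩ := intermediate_value_Ioo hhalf hβc hy
    have htI := Ioo_subset_Icc_self ht
    rw [funext hg, hD, hinv t htI, sign_bidUtility_deriv hx0 (by linarith [ht.1]),
      hβmono.sign_apply_sub_apply hx htI, hβeq]
    exact ⟨hasDerivAt_bidUtility_equilibriumBid hFderiv hFmono hf hF01 (by norm_num)
      (hβeq ▸ hinv) hx0.ne' ht, rfl⟩
  have hgc : ContinuousOn g (Icc (β (1/2)) (β M)) := by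
    have := continuousOn_Icc_of_leftInvOn hhalf hβc hβmono.monotoneOn hinv
    have := LeftInvOn.mapsTo hinv (intermediate_value_Icc hhalf hβc)
    rw [funext hg]
    fun_prop
  refine ⟨fun y hy => (hderiv y hy).1, fun y hy h => ?_, fun y hy h => ?_, fun y hy h => ?_,
    apply_lt_apply_of_hasDerivAt_of_sign_eq hgc (hβmono.monotoneOn.mapsTo_Icc hx)
      (fun y hy => (hderiv y hy).1) fun y hy => (hderiv y hy).2⟩
  · rw [← sign_eq_one_iff, (hderiv y hy).2, sign_pos (sub_pos.2 h)]
  · rw [← _root_.sign_eq_zero_iff, (hderiv y hy).2, h, sub_self, _root_.sign_zero]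
  · rw [← sign_eq_neg_one_iff, (hderiv y hy).2, sign_neg (sub_neg.2 h)]

/-- Claim 1 in the proof of Theorem 6: the expected utility
`g(y) = x·e^y·F(β⁻¹(y)) + x(1 − e^y)/(1 − e^{−x})` of a risk-averse bidder with
value `x` bidding `y` against an opponent bidding `β(v₂)` has derivative
`g'(y) = (x e^y / ((1 − e^{−x})(e^{β⁻¹(y)} − 1)))·(1 − e^{−x + β⁻¹(y)})`;
the derivative is positive for `y < β(x)`, zero at `y = β(x)`, negative for
`y > β(x)`, and `g` attains its unique global maximum at `y = β(x)`. -/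
theorem stmt10 (M x : ℝ) (hM : 1/2 < M) (hx : x ∈ Set.Icc (1/2 : ℝ) M)
    (F f β βinv : ℝ → ℝ)
    (hFderiv : ∀ t ∈ Set.Icc (1/2 : ℝ) M, HasDerivAt F (f t) t)
    (hfpos : ∀ t ∈ Set.Icc (1/2 : ℝ) M, 0 < f t)
    (hFmono : StrictMonoOn F (Set.Icc (1/2 : ℝ) M))
    (hF0 : F (1/2) = 0) (hF1 : F M = 1)
    (hβ : ∀ y : ℝ, β y =
      ∫ t in (1/2 : ℝ)..y, f t * (Real.exp t - 1) / (F t + (1 - F t) * Real.exp t))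
    (hinv : ∀ t ∈ Set.Icc (1/2 : ℝ) M, βinv (β t) = t)
    (hinv2 : ∀ y ∈ Set.Icc (β (1/2)) (β M), β (βinv y) = y)
    (g D : ℝ → ℝ)
    (hg : ∀ y : ℝ, g y =
      x * Real.exp y * F (βinv y) + x * (1 - Real.exp y) / (1 - Real.exp (-x)))
    (hD : ∀ y : ℝ, D y =
      x * Real.exp y / ((1 - Real.exp (-x)) * (Real.exp (βinv y) - 1)) *
        (1 - Real.exp (-x + βinv y))) :
    (∀ y ∈ Set.Ioo (β (1/2)) (β M), HasDerivAt g (D y) y) ∧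
    (∀ y ∈ Set.Ioo (β (1/2)) (β M), y < β x → 0 < D y) ∧
    (∀ y ∈ Set.Ioo (β (1/2)) (β M), y = β x → D y = 0) ∧
    (∀ y ∈ Set.Ioo (β (1/2)) (β M), β x < y → D y < 0) ∧
    (∀ y ∈ Set.Icc (β (1/2)) (β M), y ≠ β x → g y < g (β x)) :=
  stmt10_general M x hx F f β βinv hFderiv hfpos hFmono hF0 hF1 hβ hinv g D hg hD
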